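/- arXiv:0901.3692 — 9 statements merged into one kernel-verified Lean document; each statement's English description precedes it below -/
import Mathlib

section
/- For every nonempty finite subset B of alternatives, the upward uncovered set of B is nonempty: there exists x ∈ B such that no y ∈ B upward covers x in B. -/
def upCovers {α : Type*} (dom : α → α → Prop) (B : Set α) (x y : α) : Prop :=
  dom x y ∧ ∀ z ∈ B, dom z x → dom z y

def upUncovered {α : Type*} (dom : α → α → Prop) (B : Set α) : Set α :=
  {x | x ∈ B ∧ ¬ ∃ y ∈ B, upCovers dom B y x}

def isUpCoveringSet {α : Type*} (dom : α → α → Prop) (M : Set α) : Prop :=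
  upUncovered dom M = M ∧ ∀ x ∉ M, x ∉ upUncovered dom (insert x M)

def isMinUpCoveringSet {α : Type*} (dom : α → α → Prop) (M : Set α) : Prop :=
  isUpCoveringSet dom M ∧ ∀ M' ⊂ M, ¬ isUpCoveringSet dom M'

/-! Upward covering within `B` is transitive on `B` (the coverer must lie in `B`, so that it can
play the role of `z` in the covering condition) and, `dom` being asymmetric, irreflexive. A relation
that is transitive and irreflexive on a finite nonempty set has a minimal element there. -/

theorem Set.Finite.exists_forall_not_rel {α : Type*} {r : α → α → Prop} {s : Set α}
    (hs : s.Finite) (hne : s.Nonempty)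
    (htrans : ∀ x ∈ s, ∀ y ∈ s, ∀ z ∈ s, r x y → r y z → r x z) (hirr : ∀ x ∈ s, ¬ r x x) :
    ∃ m ∈ s, ∀ y ∈ s, ¬ r y m := by
  have : Finite s := hs
  let rs : s → s → Prop := fun a b => r a b
  have : IsTrans s rs := ⟨fun a b c => htrans a a.2 b b.2 c c.2⟩
  have : Std.Irrefl rs := ⟨fun a => hirr a a.2⟩
  obtain ⟨m, -, hm⟩ := (Finite.wellFounded_of_trans_of_irrefl rs).has_min Set.univ
    ⟨⟨hne.some, hne.some_mem⟩, trivial⟩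
  exact ⟨m, m.2, fun y hy => hm ⟨y, hy⟩ trivial⟩

section

variable {α : Type*} {dom : α → α → Prop} {B : Set α}

theorem upCovers_trans {x y z : α} (hx : x ∈ B) (hxy : upCovers dom B x y)
    (hyz : upCovers dom B y z) : upCovers dom B x z :=
  ⟨hyz.2 x hx hxy.1, fun w hw hwx => hyz.2 w hw (hxy.2 w hw hwx)⟩

theorem not_upCovers_self (hirr : ∀ a, ¬ dom a a) (x : α) : ¬ upCovers dom B x x :=
  fun h => hirr x h.1

end

theorem upUncovered_nonempty {α : Type*} (dom : α → α → Prop)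
    (hasym : ∀ a b, dom a b → ¬ dom b a) (B : Set α)
    (hfin : B.Finite) (hne : B.Nonempty) :
    ∃ x ∈ B, ∀ y ∈ B, ¬ upCovers dom B y x :=
  hfin.exists_forall_not_rel hne (fun _ hx _ _ _ _ hxy hyz => upCovers_trans hx hxy hyz)
    (fun x _ => not_upCovers_self (fun a h => hasym a a h h) x)
end

section
/- Every alternative that is undominated in A (i.e., no alternative in A dominates it) belongs to every upward covering set for A. -/
theorem exists_dom_of_mem_of_notMem_upUncovered {α : Type*} {dom : α → α → Prop} {B : Set α}
    {x : α} (hxB : x ∈ B) (hx : x ∉ upUncovered dom B) : ∃ y ∈ B, dom y x := by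
  have hcov : ∃ y ∈ B, upCovers dom B y x := not_not.mp fun h => hx ⟨hxB, h⟩
  obtain ⟨y, hyB, hyx⟩ := hcov
  exact ⟨y, hyB, hyx.1⟩

theorem undominated_mem_upCoveringSet_general {α : Type*} (dom : α → α → Prop)
    (M : Set α) (hM : isUpCoveringSet dom M)
    (x : α) (hx : ∀ y : α, ¬ dom y x) :
    x ∈ M := by
  by_contra hxM
  obtain ⟨y, -, hyx⟩ :=
    exists_dom_of_mem_of_notMem_upUncovered (Set.mem_insert x M) (hM.2 x hxM)
  exact hx y hyx

theorem undominated_mem_upCoveringSet {α : Type*} [Fintype α] (dom : α → α → Prop)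
    (hasym : ∀ a b, dom a b → ¬ dom b a)
    (M : Set α) (hM : isUpCoveringSet dom M)
    (x : α) (hx : ∀ y : α, ¬ dom y x) :
    x ∈ M :=
  undominated_mem_upCoveringSet_general dom M hM x hx
end

section
/- Suppose a1, a2, a3 ∈ A form a 3-cycle a1 ≻ a2 ≻ a3 ≻ a1, no other dominations hold among a1, a2, a3, and no alternative in A \ {a1, a2, a3} dominates any of a1, a2, a3. Then every upward covering set for A contains all of a1, a2, a3. -/
namespace isUpCoveringSet

variable {α : Type*} {dom : α → α → Prop} {M : Set α}

theorem exists_upCovers_of_notMem (hirr : ∀ a, ¬ dom a a) (hM : isUpCoveringSet dom M)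
    {x : α} (hx : x ∉ M) : ∃ y ∈ M, upCovers dom (insert x M) y x := by
  have hcov := hM.2 x hx
  simp only [upUncovered, Set.mem_ofPred_eq, Set.mem_insert_iff, true_or, true_and,
    not_not] at hcov
  obtain ⟨y, rfl | hy, hyx⟩ := hcov
  · exact absurd hyx.1 (hirr y)
  · exact ⟨y, hy, hyx⟩

theorem mem_of_forall_dom_eq (hirr : ∀ a, ¬ dom a a) (hM : isUpCoveringSet dom M)
    {a b c : α} (hbc : dom b c) (hba : ¬ dom b a)
    (hdom_a : ∀ z, dom z a → z = c) (hdom_b : ∀ z, dom z b → z = a) : a ∈ M := by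
  by_contra ha
  obtain ⟨y, hy, hya, hcov⟩ := hM.exists_upCovers_of_notMem hirr ha
  obtain rfl := hdom_a y hya
  have hb : b ∉ M := fun hb => hba (hcov b (Set.mem_insert_of_mem a hb) hbc)
  obtain ⟨y', hy', hy'b, -⟩ := hM.exists_upCovers_of_notMem hirr hb
  exact ha (hdom_b y' hy'b ▸ hy')

end isUpCoveringSet

theorem undominated_threeCycle_mem_upCoveringSet_general {α : Type*}
    (dom : α → α → Prop) (hasym : ∀ a b, dom a b → ¬ dom b a)
    (a1 a2 a3 : α)
    (h12 : dom a1 a2) (h23 : dom a2 a3) (h31 : dom a3 a1)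
    (h13 : ¬ dom a1 a3) (h21 : ¬ dom a2 a1) (h32 : ¬ dom a3 a2)
    (hout : ∀ z : α, z ∉ ({a1, a2, a3} : Set α) →
      ¬ dom z a1 ∧ ¬ dom z a2 ∧ ¬ dom z a3)
    (M : Set α) (hM : isUpCoveringSet dom M) :
    a1 ∈ M ∧ a2 ∈ M ∧ a3 ∈ M := by
  have hirr : ∀ a, ¬ dom a a := fun a h => hasym a a h h
  have hin : ∀ z x, dom z x → x = a1 ∨ x = a2 ∨ x = a3 → z = a1 ∨ z = a2 ∨ z = a3 := by
    intro z x hzx hx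
    by_contra hz
    obtain ⟨h1, h2, h3⟩ := hout z hz
    rcases hx with rfl | rfl | rfl <;> contradiction
  have hdom1 : ∀ z, dom z a1 → z = a3 := fun z hz => by
    rcases hin z a1 hz (by simp) with rfl | rfl | rfl
    exacts [(hirr _ hz).elim, (h21 hz).elim, rfl]
  have hdom2 : ∀ z, dom z a2 → z = a1 := fun z hz => by
    rcases hin z a2 hz (by simp) with rfl | rfl | rfl
    exacts [rfl, (hirr _ hz).elim, (h32 hz).elim]
  have hdom3 : ∀ z, dom z a3 → z = a2 := fun z hz => by
    rcases hin z a3 hz (by simp) with rfl | rfl | rfl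
    exacts [(h13 hz).elim, rfl, (hirr _ hz).elim]
  exact ⟨hM.mem_of_forall_dom_eq hirr h23 h21 hdom1 hdom2,
    hM.mem_of_forall_dom_eq hirr h31 h32 hdom2 hdom3,
    hM.mem_of_forall_dom_eq hirr h12 h13 hdom3 hdom1⟩

theorem undominated_threeCycle_mem_upCoveringSet {α : Type*} [Fintype α]
    (dom : α → α → Prop) (hasym : ∀ a b, dom a b → ¬ dom b a)
    (a1 a2 a3 : α)
    (h12 : dom a1 a2) (h23 : dom a2 a3) (h31 : dom a3 a1)
    (h13 : ¬ dom a1 a3) (h21 : ¬ dom a2 a1) (h32 : ¬ dom a3 a2)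
    (hout : ∀ z : α, z ∉ ({a1, a2, a3} : Set α) →
      ¬ dom z a1 ∧ ¬ dom z a2 ∧ ¬ dom z a3)
    (M : Set α) (hM : isUpCoveringSet dom M) :
    a1 ∈ M ∧ a2 ∈ M ∧ a3 ∈ M :=
  undominated_threeCycle_mem_upCoveringSet_general dom hasym a1 a2 a3 h12 h23 h31 h13 h21 h32 hout M
    hM
end

section
/- McGarvey's theorem: for every asymmetric binary relation ≻ on a finite set A, there exist a finite number of voters, each with a strict linear order over A, such that for all x, y ∈ A, x ≻ y holds if and only if a strict majority of the voters rank x above y. -/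
/-!
For every pair `a ≻ b` take two voters who both rank `a` just above `b` and who disagree on
every other pair of alternatives: their net margin is `2` on `(a, b)`, `-2` on `(b, a)` and `0`
elsewhere. Summed over all pairs of `≻`, the margin of `x` over `y` is
`2 [x ≻ y] - 2 [y ≻ x]`, which by asymmetry is positive exactly when `x ≻ y`.
-/

open Function

namespace McGarvey

variable {α : Type*}

noncomputable def margin {ι : Type*} (P : ι → α → α → Prop) (x y : α) : ℤ :=
  Nat.card {i // P i x y} - Nat.card {i // P i y x}

section Margin

variable {ι : Type*} (P : ι → α → α → Prop) (x y : α)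

lemma margin_pos_iff :
    0 < margin P x y ↔ Nat.card {i // P i y x} < Nat.card {i // P i x y} := by
  rw [margin, sub_pos, Nat.cast_lt]

lemma margin_comp_equiv {κ : Type*} (σ : κ ≃ ι) :
    margin (fun k => P (σ k)) x y = margin P x y := by
  rw [margin, margin, Nat.card_congr (σ.subtypeEquivOfSubtype (p := fun i => P i x y)),
    Nat.card_congr (σ.subtypeEquivOfSubtype (p := fun i => P i y x))]

lemma margin_prod {κ : Type*} [Fintype κ] [Finite ι] (P : κ × ι → α → α → Prop) :
    margin P x y = ∑ k, margin (fun i => P (k, i)) x y := by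
  have card_eq (u v : α) : Nat.card {j // P j u v} = ∑ k, Nat.card {i // P (k, i) u v} := by
    rw [Nat.card_congr (Equiv.subtypeProdEquivSigmaSubtype fun k i => P (k, i) u v),
      Nat.card_sigma]
  simp only [margin, card_eq, Nat.cast_sum, Finset.sum_sub_distrib]

lemma margin_eq_sum [Fintype ι] [∀ i, Decidable (P i x y)] [∀ i, Decidable (P i y x)] :
    margin P x y = ∑ i, ((if P i x y then 1 else 0) - (if P i y x then 1 else 0)) := by
  simp only [margin, Nat.card_eq_fintype_card, Fintype.card_subtype, Finset.card_filter,
    Nat.cast_sum, Nat.cast_ite, Nat.cast_one, Nat.cast_zero, Finset.sum_sub_distrib]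

end Margin

abbrev ranking {β : Type*} [LinearOrder β] (s : α → β) : α → α → Prop :=
  fun x y => s y < s x

lemma isStrictTotalOrder_ranking {β : Type*} [LinearOrder β] {s : α → β} (hs : Injective s) :
    IsStrictTotalOrder α (ranking s) where
  trichotomous _ _ hxy hyx := hs (le_antisymm (not_lt.1 hxy) (not_lt.1 hyx))
  irrefl x := lt_irrefl (s x)
  trans _ _ _ hxy hyz := hyz.trans hxy

variable [DecidableEq α]

/-- Both voters rank `a` just above `b`. Otherwise they disagree: voter `true` puts all other
alternatives above `a` in the order of `e`, voter `false` puts them below `b` in the reverse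
order. -/
def pairScore (e : α → ℕ) (a b : α) (v : Bool) (x : α) : ℤ :=
  if x = a then -1 else if x = b then -2 else if v then e x else -e x - 3

lemma pairScore_injective {e : α → ℕ} (he : Injective e) (a b : α) (v : Bool) :
    Injective (pairScore e a b v) := by
  intro x y hxy
  unfold pairScore at hxy
  split_ifs at hxy <;> first | (subst_vars; rfl) | omega | exact he (by omega)

lemma margin_pairScore (e : α → ℕ) (a b x y : α) :
    margin (fun v => ranking (pairScore e a b v)) x y =
      (if (x, y) = (a, b) then 2 else 0) - (if (y, x) = (a, b) then 2 else 0) := by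
  rw [margin_eq_sum, Fintype.sum_bool]
  simp only [ranking, pairScore, Prod.mk.injEq]
  split_ifs <;> grind

variable (dom : α → α → Prop) (e : α → ℕ)

def profile : {p : α × α // dom p.1 p.2} × Bool → α → α → Prop :=
  fun v => ranking (pairScore e v.1.1.1 v.1.1.2 v.2)

lemma isStrictTotalOrder_profile (he : Injective e) (v : {p : α × α // dom p.1 p.2} × Bool) :
    IsStrictTotalOrder α (profile dom e v) :=
  isStrictTotalOrder_ranking (pairScore_injective he _ _ _)

open Classical in
lemma margin_profile [Fintype α] (x y : α) :
    margin (profile dom e) x y = (if dom x y then 2 else 0) - (if dom y x then 2 else 0) := by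
  have sum_ite (c : α × α) :
      ∑ p : {p : α × α // dom p.1 p.2}, (if c = p.1 then (2 : ℤ) else 0) =
        if dom c.1 c.2 then 2 else 0 := by
    rw [← Finset.sum_subtype (Finset.univ.filter fun p : α × α => dom p.1 p.2) (by simp)
      (fun p => if c = p then (2 : ℤ) else 0), Finset.sum_ite_eq]
    simp
  rw [margin_prod]
  simp only [profile, margin_pairScore, Prod.mk.eta, Finset.sum_sub_distrib]
  rw [sum_ite, sum_ite]

end McGarvey

open McGarvey in
theorem mcgarvey {α : Type*} [Fintype α] (dom : α → α → Prop)
    (hasym : ∀ a b, dom a b → ¬ dom b a) :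
    ∃ (n : ℕ) (P : Fin n → α → α → Prop),
      (∀ i, IsStrictTotalOrder α (P i)) ∧
      ∀ x y : α, dom x y ↔
        Nat.card {i : Fin n // P i x y} > Nat.card {i : Fin n // P i y x} := by
  classical
  have he : Injective fun x => (Fintype.equivFin α x : ℕ) :=
    Fin.val_injective.comp (Fintype.equivFin α).injective
  let σ := (Fintype.equivFin ({p : α × α // dom p.1 p.2} × Bool)).symm
  refine ⟨_, fun i => profile dom _ (σ i), fun i => isStrictTotalOrder_profile dom _ he _,
    fun x y => ?_⟩
  rw [gt_iff_lt, ← margin_pos_iff, margin_comp_equiv, margin_profile]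
  by_cases hxy : dom x y
  · simp [hxy, hasym x y hxy]
  · by_cases hyx : dom y x <;> simp [hxy, hyx]
end

section
/- Every finite dominance graph admits at least one minimal upward covering set: for every finite set A with asymmetric dominance relation ≻, there exists M ⊆ A that is an upward covering set for A and such that no proper subset of M is an upward covering set for A. -/
/-! Call `M` externally stable if every outsider `x` is upward covered in `M ∪ {x}`: the
second half of being an upward covering set. Externally stable sets are closed under removing
an element that is upward covered inside the set, so an inclusion-minimal externally stable set,
which exists by finiteness (`Set.univ` is one), has no covered element and is therefore an upward
covering set. It is a minimal one, since every upward covering set is externally stable. -/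

def IsUpExternallyStable {α : Type*} (dom : α → α → Prop) (M : Set α) : Prop :=
  ∀ x ∉ M, x ∉ upUncovered dom (insert x M)

section

variable {α : Type*} {dom : α → α → Prop} {B B' : Set α} {v x y : α}

lemma upUncovered_subset (dom : α → α → Prop) (B : Set α) : upUncovered dom B ⊆ B :=
  fun _ hx => hx.1

lemma notMem_upUncovered_iff (hx : x ∈ B) :
    x ∉ upUncovered dom B ↔ ∃ y ∈ B, upCovers dom B y x := by
  simp [upUncovered, hx]

lemma upCovers.mono (hB : B' ⊆ B) (h : upCovers dom B y x) : upCovers dom B' y x :=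
  ⟨h.1, fun z hz => h.2 z (hB hz)⟩

lemma upCovers.trans (hv : v ∈ B) (hvy : upCovers dom B v y) (hyx : upCovers dom B y x) :
    upCovers dom B v x :=
  ⟨hyx.2 v hv hvy.1, fun z hz hzv => hyx.2 z hz (hvy.2 z hz hzv)⟩

/-- Adding `x` to `B` cannot spoil `v` covering `y`: `x` cannot dominate `v`, because
`v ≻ y` and `y` covers `x` force `v ≻ x`. -/
lemma upCovers.trans_insert (hasym : ∀ a b, dom a b → ¬ dom b a) (hv : v ∈ B)
    (hvy : upCovers dom B v y) (hyx : upCovers dom (insert x B) y x) :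
    upCovers dom (insert x B) v x := by
  have hvx : dom v x := hyx.2 v (Set.mem_insert_of_mem x hv) hvy.1
  refine upCovers.trans (Set.mem_insert_of_mem x hv) ⟨hvy.1, ?_⟩ hyx
  rintro z (rfl | hz) hzv
  · exact absurd hzv (hasym _ _ hvx)
  · exact hvy.2 z hz hzv

lemma IsUpExternallyStable.diff_singleton (hasym : ∀ a b, dom a b → ¬ dom b a)
    (hB : IsUpExternallyStable dom B) (hy : y ∈ B) (hv : v ∈ B) (hvy : upCovers dom B v y) :
    IsUpExternallyStable dom (B \ {y}) := by
  have hvy' : v ≠ y := by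
    rintro rfl
    exact hasym v v hvy.1 hvy.1
  intro x hx
  have hsub : insert x (B \ {y}) ⊆ insert x B := Set.insert_subset_insert Set.sdiff_subset
  rw [notMem_upUncovered_iff (Set.mem_insert x _)]
  by_cases hxy : x = y
  · subst hxy
    rw [Set.insert_sdiff_singleton, Set.insert_eq_of_mem hy]
    exact ⟨v, hv, hvy⟩
  have hxB : x ∉ B := fun hxB => hx ⟨hxB, hxy⟩
  obtain ⟨w, hw, hwx⟩ := (notMem_upUncovered_iff (Set.mem_insert x B)).mp (hB x hxB)
  by_cases hwy : w = y
  · subst hwy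
    exact ⟨v, Set.mem_insert_of_mem x ⟨hv, hvy'⟩,
      (hvy.trans_insert hasym hv hwx).mono hsub⟩
  · refine ⟨w, ?_, hwx.mono hsub⟩
    rcases hw with rfl | hw
    · exact Set.mem_insert w _
    · exact Set.mem_insert_of_mem x ⟨hw, hwy⟩

lemma upUncovered_eq_of_minimal (hasym : ∀ a b, dom a b → ¬ dom b a)
    (hB : Minimal (IsUpExternallyStable dom) B) : upUncovered dom B = B := by
  refine (upUncovered_subset dom B).antisymm fun y hy => ?_
  by_contra hyB
  obtain ⟨v, hv, hvy⟩ := (notMem_upUncovered_iff hy).mp hyB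
  exact hB.not_prop_of_lt (Set.sdiff_singleton_ssubset.mpr hy)
    (hB.prop.diff_singleton hasym hy hv hvy)

end

theorem exists_minUpCoveringSet {α : Type*} [Fintype α] (dom : α → α → Prop)
    (hasym : ∀ a b, dom a b → ¬ dom b a) :
    ∃ M : Set α, isUpCoveringSet dom M ∧
      ∀ M' ⊂ M, ¬ isUpCoveringSet dom M' := by
  have huniv : IsUpExternallyStable dom Set.univ := fun x hx => absurd (Set.mem_univ x) hx
  obtain ⟨M, hM⟩ := exists_minimal_of_wellFoundedLT _ ⟨_, huniv⟩
  exact ⟨M, ⟨upUncovered_eq_of_minimal hasym hM, hM.prop⟩,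
    fun M' hM' hcov => hM.not_prop_of_lt hM' hcov.2⟩
end

section
/- In the Brandt–Fischer upward construction from a CNF formula φ, the formula φ is satisfiable if and only if the designated alternative d is contained in some minimal upward covering set for A. -/
inductive BFAlt (n r : ℕ) where
  | X : Fin n → BFAlt n r
  | Xb : Fin n → BFAlt n r
  | X' : Fin n → BFAlt n r
  | Xb' : Fin n → BFAlt n r
  | Y : Fin r → BFAlt n r
  | D : BFAlt n r

inductive bfDom {n r : ℕ} (pos neg : Fin n → Fin r → Prop) :
    BFAlt n r → BFAlt n r → Prop where
  | cyc1 (i : Fin n) : bfDom pos neg (.X i) (.Xb i)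
  | cyc2 (i : Fin n) : bfDom pos neg (.Xb i) (.X' i)
  | cyc3 (i : Fin n) : bfDom pos neg (.X' i) (.Xb' i)
  | cyc4 (i : Fin n) : bfDom pos neg (.Xb' i) (.X i)
  | pos_lit (i : Fin n) (j : Fin r) : pos i j → bfDom pos neg (.X i) (.Y j)
  | neg_lit (i : Fin n) (j : Fin r) : neg i j → bfDom pos neg (.Xb i) (.Y j)
  | yd (j : Fin r) : bfDom pos neg (.Y j) .D

section UpCovering

variable {α : Type*} {dom : α → α → Prop} {M : Set α}

lemma upUncovered_eq_self_of_independent (hind : ∀ x ∈ M, ∀ y ∈ M, ¬ dom y x) :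
    upUncovered dom M = M :=
  Set.ext fun x => ⟨And.left, fun hx => ⟨hx, fun ⟨y, hy, hyx, _⟩ => hind x hx y hy hyx⟩⟩

lemma isUpCoveringSet.exists_upCovers [Std.Irrefl dom]
    (hM : isUpCoveringSet dom M) {x : α} (hx : x ∉ M) :
    ∃ y ∈ M, upCovers dom (insert x M) y x := by
  have hcov := hM.2 x hx
  simp only [upUncovered, Set.mem_ofPred_eq, Set.mem_insert_iff, true_or, true_and,
    not_not] at hcov
  obtain ⟨y, rfl | hy, hyx⟩ := hcov
  · exact absurd hyx.1 (irrefl_of dom y)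
  · exact ⟨y, hy, hyx⟩

/-- In `insert x M` nothing dominates a dominator `y ∈ M` of `x`, so `y` covers `x` vacuously. -/
lemma isUpCoveringSet_of_independent_of_dominating [Std.Asymm dom]
    (hind : ∀ x ∈ M, ∀ y ∈ M, ¬ dom y x) (hdom : ∀ x ∉ M, ∃ y ∈ M, dom y x) :
    isUpCoveringSet dom M := by
  refine ⟨upUncovered_eq_self_of_independent hind, fun x hx ⟨_, hunc⟩ => ?_⟩
  obtain ⟨y, hy, hyx⟩ := hdom x hx
  refine hunc ⟨y, Set.mem_insert_of_mem x hy, hyx, fun z hz hzy => ?_⟩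
  rcases hz with rfl | hz
  · exact absurd hyx (asymm_of dom hzy)
  · exact absurd hzy (hind y hy z hz)

end UpCovering

namespace bfDom

variable {n r : ℕ} {pos neg : Fin n → Fin r → Prop}

instance : Std.Asymm (bfDom pos neg) :=
  ⟨fun _ _ h₁ h₂ => by cases h₁ <;> cases h₂⟩

instance : Std.Irrefl (bfDom pos neg) :=
  Std.Asymm.irrefl

end bfDom

section Reduction

variable {n r : ℕ} {pos neg : Fin n → Fin r → Prop}

def ClauseSat (pos neg : Fin n → Fin r → Prop) (a : Fin n → Bool) (j : Fin r) : Prop :=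
  ∃ i : Fin n, (pos i j ∧ a i = true) ∨ (neg i j ∧ a i = false)

def assignmentSet (pos neg : Fin n → Fin r → Prop) (a : Fin n → Bool) : Set (BFAlt n r)
  | .X i | .X' i => a i = true
  | .Xb i | .Xb' i => a i = false
  | .Y j => ¬ ClauseSat pos neg a j
  | .D => ∀ j, ClauseSat pos neg a j

section
variable {a : Fin n → Bool}

@[simp] lemma X_mem_assignmentSet {i : Fin n} :
    .X i ∈ assignmentSet pos neg a ↔ a i = true := Iff.rfl
@[simp] lemma X'_mem_assignmentSet {i : Fin n} :
    .X' i ∈ assignmentSet pos neg a ↔ a i = true := Iff.rfl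
@[simp] lemma Xb_mem_assignmentSet {i : Fin n} :
    .Xb i ∈ assignmentSet pos neg a ↔ a i = false := Iff.rfl
@[simp] lemma Xb'_mem_assignmentSet {i : Fin n} :
    .Xb' i ∈ assignmentSet pos neg a ↔ a i = false := Iff.rfl

end

lemma assignmentSet_independent (a : Fin n → Bool) :
    ∀ x ∈ assignmentSet pos neg a, ∀ y ∈ assignmentSet pos neg a, ¬ bfDom pos neg y x := by
  intro x hx y hy hyx
  cases hyx with
  | pos_lit i j hp => exact hx ⟨i, .inl ⟨hp, hy⟩⟩
  | neg_lit i j hn => exact hx ⟨i, .inr ⟨hn, hy⟩⟩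
  | yd j => exact hy (hx j)
  | _ => simp_all

lemma assignmentSet_dominating (a : Fin n → Bool) :
    ∀ x ∉ assignmentSet pos neg a, ∃ y ∈ assignmentSet pos neg a, bfDom pos neg y x := by
  intro x hx
  cases x with
  | X i => exact ⟨.Xb' i, by simpa using hx, .cyc4 i⟩
  | Xb i => exact ⟨.X i, by simpa using hx, .cyc1 i⟩
  | X' i => exact ⟨.Xb i, by simpa using hx, .cyc2 i⟩
  | Xb' i => exact ⟨.X' i, by simpa using hx, .cyc3 i⟩
  | Y j =>
    obtain ⟨i, ⟨hp, ha⟩ | ⟨hn, ha⟩⟩ := not_not.mp hx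
    · exact ⟨.X i, ha, .pos_lit i j hp⟩
    · exact ⟨.Xb i, ha, .neg_lit i j hn⟩
  | D =>
    obtain ⟨j, hj⟩ := not_forall.mp hx
    exact ⟨.Y j, hj, .yd j⟩

lemma isUpCoveringSet_assignmentSet (a : Fin n → Bool) :
    isUpCoveringSet (bfDom pos neg) (assignmentSet pos neg a) :=
  isUpCoveringSet_of_independent_of_dominating (assignmentSet_independent a)
    (assignmentSet_dominating a)

section CoveringSet

variable {M : Set (BFAlt n r)} (hM : isUpCoveringSet (bfDom pos neg) M)
include hM

lemma Xb'_mem_of_X_notMem {i : Fin n} (hX : .X i ∉ M) : .Xb' i ∈ M := by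
  obtain ⟨y, hy, hyx, -⟩ := hM.exists_upCovers hX
  cases hyx
  exact hy

lemma X_mem_of_Xb_notMem {i : Fin n} (hXb : .Xb i ∉ M) : .X i ∈ M := by
  obtain ⟨y, hy, hyx, -⟩ := hM.exists_upCovers hXb
  cases hyx
  exact hy

/-- `x̄_i` can only cover `x_i'` if `x_i`, which dominates `x̄_i`, dominates `x_i'` too. -/
lemma X'_mem_of_X_mem {i : Fin n} (hX : .X i ∈ M) : .X' i ∈ M := by
  by_contra hX'
  obtain ⟨y, -, hyx, hcov⟩ := hM.exists_upCovers hX'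
  cases hyx
  nomatch hcov (.X i) (Set.mem_insert_of_mem _ hX) (.cyc1 i)

/-- If `x̄_i` covers `y_j` while `x_i ∈ M`, then `x_i ≻ x̄_i` forces `x_i ≻ y_j`. -/
lemma exists_lit_of_Y_notMem {j : Fin r} (hY : .Y j ∉ M) :
    ∃ i, (pos i j ∧ .X i ∈ M) ∨ (neg i j ∧ .X i ∉ M) := by
  obtain ⟨y, hy, hyx, hcov⟩ := hM.exists_upCovers hY
  cases hyx with
  | pos_lit i j hp => exact ⟨i, .inl ⟨hp, hy⟩⟩
  | neg_lit i j hn =>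
    by_cases hX : .X i ∈ M
    · cases hcov (.X i) (Set.mem_insert_of_mem _ hX) (.cyc1 i) with
      | pos_lit _ _ hp => exact ⟨i, .inl ⟨hp, hX⟩⟩
    · exact ⟨i, .inr ⟨hn, hX⟩⟩

lemma exists_Y_mem_of_D_notMem (hD : .D ∉ M) : ∃ j, .Y j ∈ M := by
  obtain ⟨y, hy, hyx, -⟩ := hM.exists_upCovers hD
  cases hyx with
  | yd j => exact ⟨j, hy⟩

lemma assignmentSet_subset {a : Fin n → Bool} (hX : ∀ i, .X i ∈ M ↔ a i = true)
    (hD : .D ∈ M) : assignmentSet pos neg a ⊆ M := by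
  intro x hx
  cases x with
  | X i => exact (hX i).2 hx
  | X' i => exact X'_mem_of_X_mem hM ((hX i).2 hx)
  | Xb i =>
    by_contra hXb
    simpa [hX, show a i = false from hx] using X_mem_of_Xb_notMem hM hXb
  | Xb' i => exact Xb'_mem_of_X_notMem hM (by simpa [hX] using hx)
  | Y j =>
    by_contra hY
    obtain ⟨i, ⟨hp, hXi⟩ | ⟨hn, hXi⟩⟩ := exists_lit_of_Y_notMem hM hY
    · exact hx ⟨i, .inl ⟨hp, (hX i).1 hXi⟩⟩
    · exact hx ⟨i, .inr ⟨hn, by simpa [hX] using hXi⟩⟩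
  | D => exact hD

lemma X_mem_iff_of_subset_assignmentSet {a : Fin n → Bool}
    (hsub : M ⊆ assignmentSet pos neg a) (i : Fin n) : .X i ∈ M ↔ a i = true := by
  refine ⟨fun hX => hsub hX, fun ha => X_mem_of_Xb_notMem hM fun hXb => ?_⟩
  simpa [ha] using hsub hXb

end CoveringSet

lemma isMinUpCoveringSet_assignmentSet {a : Fin n → Bool} (hsat : ∀ j, ClauseSat pos neg a j) :
    isMinUpCoveringSet (bfDom pos neg) (assignmentSet pos neg a) := by
  refine ⟨isUpCoveringSet_assignmentSet a, fun M hM hcov => hM.not_subset ?_⟩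
  have hD : .D ∈ M := by
    by_contra hD
    obtain ⟨j, hY⟩ := exists_Y_mem_of_D_notMem hcov hD
    exact hM.subset hY (hsat j)
  exact assignmentSet_subset hcov (X_mem_iff_of_subset_assignmentSet hcov hM.subset) hD

open Classical in
lemma isMinUpCoveringSet.eq_assignmentSet {M : Set (BFAlt n r)}
    (hM : isMinUpCoveringSet (bfDom pos neg) M) (hD : .D ∈ M) :
    assignmentSet pos neg (fun i => decide (.X i ∈ M)) = M := by
  have hsub := assignmentSet_subset hM.1 (fun _ => decide_eq_true_iff.symm) hD
  by_contra hne
  exact hM.2 _ (hsub.ssubset_of_ne hne) (isUpCoveringSet_assignmentSet _)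

end Reduction

theorem bf_sat_iff_d_in_some_minimal {n r : ℕ} (pos neg : Fin n → Fin r → Prop) :
    (∃ a : Fin n → Bool, ∀ j : Fin r, ∃ i : Fin n,
        (pos i j ∧ a i = true) ∨ (neg i j ∧ a i = false)) ↔
    (∃ M : Set (BFAlt n r),
        isMinUpCoveringSet (bfDom pos neg) M ∧ BFAlt.D ∈ M) := by
  constructor
  · rintro ⟨a, hsat⟩
    exact ⟨_, isMinUpCoveringSet_assignmentSet hsat, hsat⟩
  · rintro ⟨M, hM, hD⟩
    rw [← hM.eq_assignmentSet hD] at hD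
    exact ⟨_, hD⟩
end

section
/- In the Brandt–Fischer upward construction from a CNF formula φ, every minimal upward covering set M for A contains, for each variable v_i, exactly one of the pairs {x_i, x_i'} or {x̄_i, x̄_i'}, and contains no other alternatives from the 4-cycle of v_i. -/
/-!
Outside an upward covering set `M`, an alternative is upcovered by its unique dominator on the
4-cycle of `v_i`. So if `x_i ∉ M` then `x̄_i' ∈ M`, and `x_i' ∉ M` because `x_i'` dominates
`x̄_i'` but not `x_i`; likewise around the cycle. Hence `M` meets the cycle in `{x_i, x_i'}`,
in `{x̄_i, x̄_i'}`, or in all four alternatives. In the last case `M` is not minimal: deleting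
what `x_i` and `x_i'` dominate (which sets `v_i` true), and then `d` if some remaining clause
alternative has lost all its dominators, leaves a strictly smaller upward covering set.
-/

section UpCovering

variable {α : Type*} {dom : α → α → Prop}

def isUpInternallyStable (dom : α → α → Prop) (M : Set α) : Prop :=
  ∀ x ∈ M, ∀ y ∈ M, dom y x → ∃ z ∈ M, dom z y ∧ ¬ dom z x

def isUpExternallyStable (dom : α → α → Prop) (M : Set α) : Prop :=
  ∀ x ∉ M, ∃ y ∈ M, upCovers dom (insert x M) y x

theorem upUncovered_eq_self_iff {B : Set α} :
    upUncovered dom B = B ↔ isUpInternallyStable dom B := by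
  constructor
  · intro h x hx y hy hyx
    have hx : x ∈ upUncovered dom B := by rwa [h]
    by_contra! hcov
    exact hx.2 ⟨y, hy, hyx, hcov⟩
  · intro h
    refine Set.Subset.antisymm (fun x hx => hx.1) fun x hx => ⟨hx, ?_⟩
    rintro ⟨y, hy, hyx, hcov⟩
    obtain ⟨z, hz, hzy, hzx⟩ := h x hx y hy hyx
    exact hzx (hcov z hz hzy)

theorem isUpCoveringSet_iff [Std.Irrefl dom] {M : Set α} :
    isUpCoveringSet dom M ↔ isUpInternallyStable dom M ∧ isUpExternallyStable dom M := by
  rw [isUpCoveringSet, upUncovered_eq_self_iff]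
  refine and_congr_right fun _ => forall₂_congr fun x _ => ?_
  simp only [upUncovered, Set.mem_ofPred_eq, Set.mem_insert_iff, true_or, true_and, not_not]
  constructor
  · rintro ⟨y, rfl | hy, hyx⟩
    · exact absurd hyx.1 (irrefl y)
    · exact ⟨y, hy, hyx⟩
  · rintro ⟨y, hy, hyx⟩
    exact ⟨y, Or.inr hy, hyx⟩

theorem upCovers.anti {B B' : Set α} (hB : B' ⊆ B) {x y : α} (h : upCovers dom B y x) :
    upCovers dom B' y x :=
  ⟨h.1, fun z hz => h.2 z (hB hz)⟩

theorem upCovers_of_forall_not_dom {B : Set α} {x y : α} (hyx : dom y x)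
    (hy : ∀ z ∈ B, ¬ dom z y) : upCovers dom B y x :=
  ⟨hyx, fun z hz hzy => absurd hzy (hy z hz)⟩

theorem isUpCoveringSet.sole_dominator_upCovers [Std.Irrefl dom] {M : Set α}
    (hM : isUpCoveringSet dom M) {x y : α} (hx : x ∉ M) (hdom : ∀ z, dom z x ↔ z = y) :
    y ∈ M ∧ upCovers dom M y x := by
  obtain ⟨y', hy', hcov⟩ := (isUpCoveringSet_iff.1 hM).2 x hx
  obtain rfl := (hdom y').1 hcov.1
  exact ⟨hy', hcov.anti (Set.subset_insert x M)⟩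

end UpCovering

section BrandtFischer

variable {n r : ℕ} {pos neg : Fin n → Fin r → Prop}

instance : Std.Irrefl (bfDom pos neg) :=
  ⟨fun _ h => by cases h⟩

@[simp]
theorem not_bfDom_D {z : BFAlt n r} : ¬ bfDom pos neg .D z :=
  nofun

@[simp]
theorem bfDom_X_iff {z : BFAlt n r} {k : Fin n} : bfDom pos neg z (.X k) ↔ z = .Xb' k :=
  ⟨fun h => by cases h; rfl, fun h => h ▸ .cyc4 k⟩

@[simp]
theorem bfDom_Xb_iff {z : BFAlt n r} {k : Fin n} : bfDom pos neg z (.Xb k) ↔ z = .X k :=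
  ⟨fun h => by cases h; rfl, fun h => h ▸ .cyc1 k⟩

@[simp]
theorem bfDom_X'_iff {z : BFAlt n r} {k : Fin n} : bfDom pos neg z (.X' k) ↔ z = .Xb k :=
  ⟨fun h => by cases h; rfl, fun h => h ▸ .cyc2 k⟩

@[simp]
theorem bfDom_D_iff {z : BFAlt n r} : bfDom pos neg z .D ↔ ∃ j, z = .Y j :=
  ⟨fun h => by cases h; exact ⟨_, rfl⟩, fun ⟨j, h⟩ => h ▸ .yd j⟩

def bfBelow (pos neg : Fin n → Fin r → Prop) (i : Fin n) : Set (BFAlt n r) :=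
  {x | bfDom pos neg (.X i) x ∨ bfDom pos neg (.X' i) x}

theorem mem_bfBelow_of_dom_of_dom {i : Fin n} {x y z : BFAlt n r}
    (hz : z ∈ bfBelow pos neg i) (hzy : bfDom pos neg z y) (hyx : bfDom pos neg y x)
    (hx : x ≠ .D) : x ∈ bfBelow pos neg i := by
  rcases hz with hz | hz <;> cases hz <;> cases hzy <;> cases hyx
  all_goals first
    | exact absurd rfl hx
    | exact Or.inl (by constructor; assumption)
    | exact Or.inl (.cyc1 i)
    | exact Or.inr (.cyc3 i)

def bfReduct (pos neg : Fin n → Fin r → Prop) (M : Set (BFAlt n r)) (i : Fin n) :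
    Set (BFAlt n r) :=
  {x ∈ M \ bfBelow pos neg i |
    x = .D → ∀ y ∈ M \ bfBelow pos neg i, bfDom pos neg y x →
      ∃ z ∈ M \ bfBelow pos neg i, bfDom pos neg z y}

variable {M : Set (BFAlt n r)} {i : Fin n}

theorem bfReduct_subset : bfReduct pos neg M i ⊆ M :=
  fun _ hx => hx.1.1

theorem mem_bfReduct_of_dom {x y : BFAlt n r} (hx : x ∈ M \ bfBelow pos neg i)
    (hxy : bfDom pos neg x y) : x ∈ bfReduct pos neg M i :=
  ⟨hx, by rintro rfl; exact absurd hxy not_bfDom_D⟩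

theorem isUpInternallyStable_bfReduct (hint : isUpInternallyStable (bfDom pos neg) M) :
    isUpInternallyStable (bfDom pos neg) (bfReduct pos neg M i) := by
  intro x hx y hy hyx
  by_cases hxD : x = .D
  · subst hxD
    obtain ⟨z, hz, hzy⟩ := hx.2 rfl y hy.1 hyx
    refine ⟨z, mem_bfReduct_of_dom hz hzy, hzy, fun hzD => ?_⟩
    obtain ⟨j, rfl⟩ := bfDom_D_iff.1 hzD
    cases hzy
    exact not_bfDom_D hyx
  · obtain ⟨z, hzM, hzy, hzx⟩ := hint x hx.1.1 y hy.1.1 hyx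
    have hz : z ∉ bfBelow pos neg i := fun hz =>
      hx.1.2 (mem_bfBelow_of_dom_of_dom hz hzy hyx hxD)
    exact ⟨z, mem_bfReduct_of_dom ⟨hzM, hz⟩ hzy, hzy, hzx⟩

theorem isUpExternallyStable_bfReduct (hX : BFAlt.X i ∈ M) (hX' : BFAlt.X' i ∈ M)
    (hext : isUpExternallyStable (bfDom pos neg) M) :
    isUpExternallyStable (bfDom pos neg) (bfReduct pos neg M i) := by
  intro x hx
  by_cases hbelow : x ∈ bfBelow pos neg i
  · -- `x_i` and `x_i'` have lost their only dominators `x̄_i'` and `x̄_i`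
    rcases hbelow with hXx | hXx
    · refine ⟨.X i, mem_bfReduct_of_dom ⟨hX, by simp [bfBelow]⟩ hXx,
        upCovers_of_forall_not_dom hXx ?_⟩
      rintro z hz hzX
      obtain rfl := bfDom_X_iff.1 hzX
      rcases hz with rfl | hz
      · cases hXx
      · exact hz.1.2 (Or.inr (.cyc3 i))
    · refine ⟨.X' i, mem_bfReduct_of_dom ⟨hX', by simp [bfBelow]⟩ hXx,
        upCovers_of_forall_not_dom hXx ?_⟩
      rintro z hz hzX
      obtain rfl := bfDom_X'_iff.1 hzX
      rcases hz with rfl | hz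
      · cases hXx
      · exact hz.1.2 (Or.inl (.cyc1 i))
  by_cases hxM : x ∈ M
  · obtain rfl : x = .D := by_contra fun hxD => hx ⟨⟨hxM, hbelow⟩, fun h => absurd h hxD⟩
    obtain ⟨y, hy, hyD, hundom⟩ : ∃ y ∈ M \ bfBelow pos neg i, bfDom pos neg y .D ∧
        ∀ z ∈ M \ bfBelow pos neg i, ¬ bfDom pos neg z y := by
      by_contra! h
      exact hx ⟨⟨hxM, hbelow⟩, fun _ => h⟩
    refine ⟨y, mem_bfReduct_of_dom hy hyD, upCovers_of_forall_not_dom hyD ?_⟩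
    rintro z (rfl | hz)
    · exact not_bfDom_D
    · exact hundom z hz.1
  · obtain ⟨y, hyM, hcov⟩ := hext x hxM
    have hy : y ∉ bfBelow pos neg i := by
      rintro (hXy | hXy)
      · exact hbelow (Or.inl (hcov.2 _ (Set.mem_insert_of_mem _ hX) hXy))
      · exact hbelow (Or.inr (hcov.2 _ (Set.mem_insert_of_mem _ hX') hXy))
    exact ⟨y, mem_bfReduct_of_dom ⟨hyM, hy⟩ hcov.1,
      hcov.anti (Set.insert_subset_insert bfReduct_subset)⟩

theorem not_isMinUpCoveringSet_of_mem_cycle (hX : BFAlt.X i ∈ M) (hX' : BFAlt.X' i ∈ M)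
    (hXb : BFAlt.Xb i ∈ M) : ¬ isMinUpCoveringSet (bfDom pos neg) M := by
  rintro ⟨hM, hmin⟩
  obtain ⟨hint, hext⟩ := isUpCoveringSet_iff.1 hM
  refine hmin (bfReduct pos neg M i) ?_
    (isUpCoveringSet_iff.2
      ⟨isUpInternallyStable_bfReduct hint, isUpExternallyStable_bfReduct hX hX' hext⟩)
  exact (Set.ssubset_iff_of_subset bfReduct_subset).2
    ⟨.Xb i, hXb, fun h => h.1.2 (Or.inl (.cyc1 i))⟩

end BrandtFischer

theorem bf_minimal_contains_exactly_one_pair {n r : ℕ}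
    (pos neg : Fin n → Fin r → Prop)
    (M : Set (BFAlt n r)) (hM : isMinUpCoveringSet (bfDom pos neg) M) :
    ∀ i : Fin n,
      (BFAlt.X i ∈ M ∧ BFAlt.X' i ∈ M ∧ BFAlt.Xb i ∉ M ∧ BFAlt.Xb' i ∉ M) ∨
      (BFAlt.Xb i ∈ M ∧ BFAlt.Xb' i ∈ M ∧ BFAlt.X i ∉ M ∧ BFAlt.X' i ∉ M) := by
  intro i
  have hcov := hM.1
  by_cases hX : BFAlt.X i ∈ M
  · have hX' : BFAlt.X' i ∈ M := by
      by_contra hX'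
      exact nomatch (hcov.sole_dominator_upCovers hX' fun _ => bfDom_X'_iff).2.2 _ hX (.cyc1 i)
    have hXb : BFAlt.Xb i ∉ M := fun hXb => not_isMinUpCoveringSet_of_mem_cycle hX hX' hXb hM
    have hXb' : BFAlt.Xb' i ∉ M := fun hXb' =>
      nomatch (hcov.sole_dominator_upCovers hXb fun _ => bfDom_Xb_iff).2.2 _ hXb' (.cyc4 i)
    exact Or.inl ⟨hX, hX', hXb, hXb'⟩
  · obtain ⟨hXb', hXb'_cov⟩ := hcov.sole_dominator_upCovers hX fun _ => bfDom_X_iff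
    have hX' : BFAlt.X' i ∉ M := fun hX' => nomatch hXb'_cov.2 _ hX' (.cyc3 i)
    obtain ⟨hXb, -⟩ := hcov.sole_dominator_upCovers hX' fun _ => bfDom_X'_iff
    exact Or.inr ⟨hXb, hXb', hX, hX'⟩
end

section
/- In the downward-covering construction from a CNF formula φ (Construction 3 of the paper), if a minimal downward covering set M for A contains the alternative d, then M = A, i.e., M contains all alternatives. -/
def downCovers {α : Type*} (dom : α → α → Prop) (B : Set α) (x y : α) : Prop :=
  dom x y ∧ ∀ z ∈ B, dom y z → dom x z

def downUncovered {α : Type*} (dom : α → α → Prop) (B : Set α) : Set α :=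
  {x | x ∈ B ∧ ¬ ∃ y ∈ B, downCovers dom B y x}

def isDownCoveringSet {α : Type*} (dom : α → α → Prop) (M : Set α) : Prop :=
  downUncovered dom M = M ∧ ∀ x ∉ M, x ∉ downUncovered dom (insert x M)

def isMinDownCoveringSet {α : Type*} (dom : α → α → Prop) (M : Set α) : Prop :=
  isDownCoveringSet dom M ∧ ∀ M' ⊂ M, ¬ isDownCoveringSet dom M'

inductive DBase (k l : ℕ) where
  | X : Fin k → DBase k l
  | X' : Fin k → DBase k l
  | X'' : Fin k → DBase k l
  | Xb : Fin k → DBase k l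
  | Xb' : Fin k → DBase k l
  | Xb'' : Fin k → DBase k l
  | Z : Fin k → DBase k l
  | Z' : Fin k → DBase k l
  | Z'' : Fin k → DBase k l
  | Y : Fin l → DBase k l

inductive DAlt (k l : ℕ) where
  | base : DBase k l → DAlt k l
  | hat : DBase k l → DAlt k l
  | b : DAlt k l
  | c : DAlt k l
  | d : DAlt k l

inductive dDom {k l : ℕ} (pos neg : Fin k → Fin l → Prop) :
    DAlt k l → DAlt k l → Prop where
  -- 6-cycle
  | e1 (i : Fin k) : dDom pos neg (.base (.X i)) (.base (.Xb i))
  | e2 (i : Fin k) : dDom pos neg (.base (.Xb i)) (.base (.X' i))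
  | e3 (i : Fin k) : dDom pos neg (.base (.X' i)) (.base (.Xb' i))
  | e4 (i : Fin k) : dDom pos neg (.base (.Xb' i)) (.base (.X'' i))
  | e5 (i : Fin k) : dDom pos neg (.base (.X'' i)) (.base (.Xb'' i))
  | e6 (i : Fin k) : dDom pos neg (.base (.Xb'' i)) (.base (.X i))
  -- nested 3-cycles
  | t1 (i : Fin k) : dDom pos neg (.base (.X i)) (.base (.X' i))
  | t2 (i : Fin k) : dDom pos neg (.base (.X' i)) (.base (.X'' i))
  | t3 (i : Fin k) : dDom pos neg (.base (.X'' i)) (.base (.X i))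
  | t4 (i : Fin k) : dDom pos neg (.base (.Xb i)) (.base (.Xb' i))
  | t5 (i : Fin k) : dDom pos neg (.base (.Xb' i)) (.base (.Xb'' i))
  | t6 (i : Fin k) : dDom pos neg (.base (.Xb'' i)) (.base (.Xb i))
  -- z-edges
  | z1 (i : Fin k) : dDom pos neg (.base (.Z' i)) (.base (.Z i))
  | z2 (i : Fin k) : dDom pos neg (.base (.Z'' i)) (.base (.Z i))
  | z3 (i : Fin k) : dDom pos neg (.base (.Z i)) (.base (.X i))
  | z4 (i : Fin k) : dDom pos neg (.base (.Z i)) (.base (.Xb i))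
  | z5 (i : Fin k) : dDom pos neg (.base (.Z' i)) (.base (.X i))
  | z6 (i : Fin k) : dDom pos neg (.base (.Z'' i)) (.base (.Xb i))
  | dz (i : Fin k) : dDom pos neg .d (.base (.Z i))
  -- literals
  | pos_lit (i : Fin k) (j : Fin l) : pos i j → dDom pos neg (.base (.X i)) (.base (.Y j))
  | neg_lit (i : Fin k) (j : Fin l) : neg i j → dDom pos neg (.base (.Xb i)) (.base (.Y j))
  -- hat edges
  | bh (a : DBase k l) : dDom pos neg .b (.hat a)
  | ah (a : DBase k l) : dDom pos neg (.base a) (.hat a)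
  | hd (a : DBase k l) : dDom pos neg (.hat a) .d
  -- d and c
  | dy (j : Fin l) : dDom pos neg .d (.base (.Y j))
  | cd : dDom pos neg .c .d

/-! By external stability, an alternative `x ∉ M` is downward covered in `insert x M` by some `y`,
and `y` then has to dominate everything in `M` that `x` dominates.
Nothing dominates `b` or `c`; the dominators `b`, `a` of `â` miss `d ∈ M`; and no dominator of
`a` dominates `â`. -/

section DownCovering

variable {α : Type*} {dom : α → α → Prop} {M : Set α}

theorem isDownCoveringSet.exists_dom_of_notMem (hM : isDownCoveringSet dom M) {x : α}
    (hx : x ∉ M) : ∃ y, dom y x ∧ ∀ z ∈ M, dom x z → dom y z := by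
  have hcov := hM.2 x hx
  simp only [downUncovered, Set.mem_ofPred_eq, Set.mem_insert_iff, true_or, true_and,
    not_not] at hcov
  obtain ⟨y, -, hyx, hy⟩ := hcov
  exact ⟨y, hyx, fun z hz => hy z (Or.inr hz)⟩

theorem isDownCoveringSet.mem_of_forall_not_dom (hM : isDownCoveringSet dom M) {x : α}
    (hx : ∀ y, ¬ dom y x) : x ∈ M := by
  by_contra hxM
  obtain ⟨y, hyx, -⟩ := hM.exists_dom_of_notMem hxM
  exact hx y hyx

theorem isDownCoveringSet.mem_of_dom_mem (hM : isDownCoveringSet dom M) {x z : α} (hz : z ∈ M)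
    (hxz : dom x z) (hx : ∀ y, dom y x → ¬ dom y z) : x ∈ M := by
  by_contra hxM
  obtain ⟨y, hyx, hy⟩ := hM.exists_dom_of_notMem hxM
  exact hx y hyx (hy z hz hxz)

end DownCovering

section Construction3

variable {k l : ℕ} {pos neg : Fin k → Fin l → Prop}

theorem not_dDom_b (y : DAlt k l) : ¬ dDom pos neg y .b := nofun

theorem not_dDom_c (y : DAlt k l) : ¬ dDom pos neg y .c := nofun

theorem not_dDom_d_of_dDom_hat {a : DBase k l} {y : DAlt k l} (hy : dDom pos neg y (.hat a)) :
    ¬ dDom pos neg y .d := by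
  cases hy <;> nofun

theorem not_dDom_hat_of_dDom_base {a : DBase k l} {y : DAlt k l}
    (hy : dDom pos neg y (.base a)) : ¬ dDom pos neg y (.hat a) := by
  cases hy <;> nofun

end Construction3

theorem cons3_d_in_minimal_implies_all {k l : ℕ} (pos neg : Fin k → Fin l → Prop)
    (M : Set (DAlt k l)) (hM : isMinDownCoveringSet (dDom pos neg) M)
    (hd : DAlt.d ∈ M) :
    M = Set.univ := by
  have hcov := hM.1
  have hhat (a : DBase k l) : DAlt.hat a ∈ M :=
    hcov.mem_of_dom_mem hd (dDom.hd a) fun _ => not_dDom_d_of_dDom_hat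
  refine Set.eq_univ_of_forall fun x => ?_
  cases x with
  | base a => exact hcov.mem_of_dom_mem (hhat a) (dDom.ah a) fun _ => not_dDom_hat_of_dDom_base
  | hat a => exact hhat a
  | b => exact hcov.mem_of_forall_not_dom not_dDom_b
  | c => exact hcov.mem_of_forall_not_dom not_dDom_c
  | d => exact hd
end

section
/- In the downward-covering construction from a CNF formula φ (Construction 3 of the paper), φ is satisfiable if and only if no minimal downward covering set for A contains the alternative d. -/
/-
An assignment `a` gives the covering set `assignmentSet a`: `b`, `c`, all `z_i'`, `z_i''`, and for
each variable the 3-cycle of its true literal; it avoids `d`. A covering set containing `d` must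
contain every alternative (no dominator of `â` also dominates `d`, no dominator of `a` also
dominates `â`), so if `φ` is satisfiable it is not minimal. Conversely, a minimal covering set
below the full one avoiding `d` yields an assignment: covering `d` from outside forces all `z_i`
and `y_j` out, covering `z_i` keeps `x_i` and `x̄_i` from both being in, and covering `y_j` needs a
literal of `f_j` inside.
-/

section DownCovering

variable {α : Type*} {dom : α → α → Prop}

lemma isDownCoveringSet_iff [Std.Irrefl dom] {M : Set α} :
    isDownCoveringSet dom M ↔
      (∀ x ∈ M, ∀ y ∈ M, ¬ downCovers dom M y x) ∧
        ∀ x ∉ M, ∃ y ∈ M, downCovers dom M y x := by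
  have hins : ∀ x y, dom y x →
      (downCovers dom (insert x M) y x ↔ downCovers dom M y x) := fun x y _ => by
    simp [downCovers, irrefl x]
  constructor
  · rintro ⟨hint, hext⟩
    refine ⟨fun x hx y hy hyx => ?_, fun x hx => ?_⟩
    · rw [← hint] at hx
      exact hx.2 ⟨y, hy, hyx⟩
    · have hcov : ∃ y ∈ insert x M, downCovers dom (insert x M) y x := by
        by_contra h
        exact hext x hx ⟨Set.mem_insert x M, h⟩
      obtain ⟨y, rfl | hy, hyx⟩ := hcov
      · exact absurd hyx.1 (irrefl y)
      · exact ⟨y, hy, (hins x y hyx.1).1 hyx⟩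
  · rintro ⟨hint, hext⟩
    refine ⟨Set.ext fun x => ⟨And.left, fun hx => ⟨hx, fun ⟨y, hy, hyx⟩ => hint x hx y hy hyx⟩⟩,
      fun x hx hcov => ?_⟩
    obtain ⟨y, hy, hyx⟩ := hext x hx
    exact hcov.2 ⟨y, Set.mem_insert_of_mem x hy, (hins x y hyx.1).2 hyx⟩

lemma exists_downCovers_of_notMem [Std.Irrefl dom] {M : Set α} (hM : isDownCoveringSet dom M)
    {x : α} (hx : x ∉ M) : ∃ y ∈ M, downCovers dom M y x :=
  (isDownCoveringSet_iff.1 hM).2 x hx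

lemma isMinDownCoveringSet_iff_minimal {M : Set α} :
    isMinDownCoveringSet dom M ↔ Minimal (isDownCoveringSet dom) M := by
  rw [Set.minimal_iff_forall_ssubset]
  rfl

lemma exists_isMinDownCoveringSet_subset [Finite α] {M : Set α}
    (hM : isDownCoveringSet dom M) : ∃ M' ⊆ M, isMinDownCoveringSet dom M' := by
  simp only [isMinDownCoveringSet_iff_minimal]
  exact exists_minimal_le_of_wellFoundedLT _ M hM

end DownCovering

namespace Cons3

instance {k l : ℕ} : Fintype (DBase k l) := derive_fintype% _
instance {k l : ℕ} : Fintype (DAlt k l) := derive_fintype% _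

variable {k l : ℕ} {pos neg : Fin k → Fin l → Prop}

instance : Std.Irrefl (dDom pos neg) := ⟨fun _ h => nomatch h⟩

lemma isDownCoveringSet_univ (j : Fin l) : isDownCoveringSet (dDom pos neg) Set.univ := by
  refine isDownCoveringSet_iff.2
    ⟨fun x _ y _ ⟨hyx, hcov⟩ => ?_, fun x hx => absurd (Set.mem_univ x) hx⟩
  cases x with
  | base a => have := hcov (.hat a) trivial (.ah a); cases hyx <;> cases this
  | hat a => have := hcov .d trivial (.hd a); cases hyx <;> cases this
  | b | c => nomatch hyx
  | d => have := hcov (.base (.Y j)) trivial (.dy j); cases hyx <;> cases this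

variable {M : Set (DAlt k l)}

lemma eq_univ_of_d_mem (hM : isDownCoveringSet (dDom pos neg) M) (hd : DAlt.d ∈ M) :
    M = Set.univ := by
  have hmem : ∀ x, (∀ y, ¬ downCovers (dDom pos neg) M y x) → x ∈ M := fun x hx => by
    by_contra h
    obtain ⟨y, -, hyx⟩ := exists_downCovers_of_notMem hM h
    exact hx y hyx
  have hhat : ∀ a, DAlt.hat a ∈ M := fun a => hmem _ fun y ⟨hya, hcov⟩ => by
    have := hcov .d hd (.hd a)
    cases hya <;> cases this
  have hbase : ∀ a, DAlt.base a ∈ M := fun a => hmem _ fun y ⟨hya, hcov⟩ => by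
    have := hcov (.hat a) (hhat a) (.ah a)
    cases hya <;> cases this
  refine Set.eq_univ_of_forall fun x => ?_
  cases x with
  | base a => exact hbase a
  | hat a => exact hhat a
  | b | c => exact hmem _ fun y ⟨hyx, _⟩ => nomatch hyx
  | d => exact hd

lemma sat_of_d_notMem (hM : isDownCoveringSet (dDom pos neg) M) (hd : DAlt.d ∉ M) :
    ∃ a : Fin k → Bool, ∀ j : Fin l, ∃ i : Fin k,
      (pos i j ∧ a i = true) ∨ (neg i j ∧ a i = false) := by
  classical
  have hcov_d : ∀ z ∈ M, ¬ dDom pos neg .d z := by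
    obtain ⟨y, -, hyd, hcov⟩ := exists_downCovers_of_notMem hM hd
    intro z hz hdz
    have := hcov z hz hdz
    cases hyd <;> cases hdz <;> cases this
  have hZ : ∀ i, DAlt.base (.Z i) ∉ M := fun i h => hcov_d _ h (.dz i)
  have hY : ∀ j, DAlt.base (.Y j) ∉ M := fun j h => hcov_d _ h (.dy j)
  have hXb : ∀ i, DAlt.base (.X i) ∈ M → DAlt.base (.Xb i) ∉ M := by
    intro i hX hXb
    obtain ⟨y, hy, hyZ, hcov⟩ := exists_downCovers_of_notMem hM (hZ i)
    cases hyZ with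
    | z1 => cases hcov _ hXb (.z4 i)
    | z2 => cases hcov _ hX (.z3 i)
    | dz => exact hd hy
  refine ⟨fun i => decide (DAlt.base (.X i) ∈ M), fun j => ?_⟩
  obtain ⟨y, hy, hyY, -⟩ := exists_downCovers_of_notMem hM (hY j)
  cases hyY with
  | pos_lit i _ hp => exact ⟨i, .inl ⟨hp, decide_eq_true hy⟩⟩
  | neg_lit i _ hn => exact ⟨i, .inr ⟨hn, decide_eq_false fun hX => hXb i hX hy⟩⟩
  | dy => exact absurd hy hd

def assignmentSet (a : Fin k → Bool) : Set (DAlt k l) :=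
  {v | match v with
    | .base (.X i) | .base (.X' i) | .base (.X'' i) => a i = true
    | .base (.Xb i) | .base (.Xb' i) | .base (.Xb'' i) => a i = false
    | .base (.Z' _) | .base (.Z'' _) | .b | .c => True
    | _ => False}

lemma not_downCovers_assignmentSet (a : Fin k → Bool) {x y : DAlt k l}
    (hx : x ∈ assignmentSet a) (hy : y ∈ assignmentSet a) :
    ¬ downCovers (dDom pos neg) (assignmentSet a) y x := by
  rintro ⟨hyx, hcov⟩
  cases hyx
  case t1 i => nomatch hcov (.base (.X'' i)) hx (.t2 i)
  case t2 i => nomatch hcov (.base (.X i)) hx (.t3 i)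
  case t3 i | z5 i => nomatch hcov (.base (.X' i)) hx (.t1 i)
  case t4 i => nomatch hcov (.base (.Xb'' i)) hx (.t5 i)
  case t5 i => nomatch hcov (.base (.Xb i)) hx (.t6 i)
  case t6 i | z6 i => nomatch hcov (.base (.Xb' i)) hx (.t4 i)
  all_goals simp_all [assignmentSet]

lemma exists_downCovers_assignmentSet (a : Fin k → Bool)
    (hsat : ∀ j : Fin l, ∃ i : Fin k, (pos i j ∧ a i = true) ∨ (neg i j ∧ a i = false))
    {x : DAlt k l} (hx : x ∉ assignmentSet a) :
    ∃ y ∈ assignmentSet a, downCovers (dDom pos neg) (assignmentSet a) y x := by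
  -- `x` is covered by its predecessor on the 6-cycle, `z_i` by `z_i'` or `z_i''` according to
  -- `a i`, `y_j` by a true literal of `f_j`, each `â` by `b`, and `d` by `c`.
  rcases x with (⟨i | i | i | i | i | i | i | i | i | j⟩ | v | _ | _ | _) <;>
    [refine ⟨.base (.Xb'' i), ?_, .e6 i, ?_⟩;
     refine ⟨.base (.Xb i), ?_, .e2 i, ?_⟩;
     refine ⟨.base (.Xb' i), ?_, .e4 i, ?_⟩;
     refine ⟨.base (.X i), ?_, .e1 i, ?_⟩;
     refine ⟨.base (.X' i), ?_, .e3 i, ?_⟩;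
     refine ⟨.base (.X'' i), ?_, .e5 i, ?_⟩;
     cases hai : a i <;>
       [refine ⟨.base (.Z'' i), trivial, .z2 i, ?_⟩; refine ⟨.base (.Z' i), trivial, .z1 i, ?_⟩];
     exact absurd trivial hx;
     exact absurd trivial hx;
     obtain ⟨i, ⟨hp, hai⟩ | ⟨hn, hai⟩⟩ := hsat j <;>
       [refine ⟨.base (.X i), hai, .pos_lit i j hp, ?_⟩;
        refine ⟨.base (.Xb i), hai, .neg_lit i j hn, ?_⟩];
     refine ⟨.b, trivial, .bh v, ?_⟩;
     exact absurd trivial hx;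
     exact absurd trivial hx;
     refine ⟨.c, trivial, .cd, ?_⟩]
  all_goals first
    | simp_all [assignmentSet]; done
    | intro z hz hxz; cases hxz <;> first | (simp_all [assignmentSet]; done) | constructor

lemma isDownCoveringSet_assignmentSet (a : Fin k → Bool)
    (hsat : ∀ j : Fin l, ∃ i : Fin k, (pos i j ∧ a i = true) ∨ (neg i j ∧ a i = false)) :
    isDownCoveringSet (dDom pos neg) (assignmentSet a) :=
  isDownCoveringSet_iff.2 ⟨fun _ hx _ hy => not_downCovers_assignmentSet a hx hy,
    fun _ hx => exists_downCovers_assignmentSet a hsat hx⟩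

end Cons3

theorem cons3_sat_iff_no_minimal_contains_d {k l : ℕ}
    (pos neg : Fin k → Fin l → Prop) :
    (∃ a : Fin k → Bool, ∀ j : Fin l, ∃ i : Fin k,
        (pos i j ∧ a i = true) ∨ (neg i j ∧ a i = false)) ↔
    (∀ M : Set (DAlt k l),
        isMinDownCoveringSet (dDom pos neg) M → DAlt.d ∉ M) := by
  constructor
  · rintro ⟨a, hsat⟩ M ⟨hM, hmin⟩ hd
    have hM_univ : M = Set.univ := Cons3.eq_univ_of_d_mem hM hd
    refine hmin (Cons3.assignmentSet a) ?_ (Cons3.isDownCoveringSet_assignmentSet a hsat)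
    rw [hM_univ, Set.ssubset_univ_iff, Set.ne_univ_iff_exists_notMem]
    exact ⟨.d, id⟩
  · intro hno_d
    rcases isEmpty_or_nonempty (Fin l) with _ | ⟨⟨j⟩⟩
    · exact ⟨fun _ => true, isEmptyElim⟩
    · obtain ⟨M, -, hM⟩ := exists_isMinDownCoveringSet_subset (Cons3.isDownCoveringSet_univ j)
      exact Cons3.sat_of_d_notMem hM.1 (hno_d M hM)
end
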